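/- Let A be a sequential variable-set automaton and let s be a state of A. If there exists an accepting run of A on some document in which the variable x is open (i.e., ⊢x has been read but ⊣x has not) at some point where A is in state s, then in every accepting run of A on any document, at every point where A is in state s, the variable x is open. -/

import Mathlib

namespace DocSpanners

/-- A span: a pair of endpoint positions `[i, j⟩`. -/
abbrev Span : Type := ℕ × ℕ

/-- `s` is a span of document `d`. -/
def IsSpanOf {α : Type} (d : List α) (s : Span) : Prop :=
  s.1 ≤ s.2 ∧ s.2 ≤ d.length

/-- A (schemaless) mapping over variable type `V`: a partial assignment of spans. -/
abbrev Mapping (V : Type) : Type := V → Option Span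

/-- `m` is a mapping of document `d`. -/
def MappingOf {α V : Type} (d : List α) (m : Mapping V) : Prop :=
  ∀ x s, m x = some s → IsSpanOf d s

/-- A spanner: maps documents to sets of mappings. -/
abbrev Spanner (α V : Type) : Type := List α → Set (Mapping V)

/-- Labels of a variable-set automaton: letters and variable markers. -/
inductive Label (α V : Type) : Type where
  | letter (a : α)
  | vopen (x : V)
  | vclose (x : V)
deriving DecidableEq

/-- The sequence of letters of a ref-word. -/
def letters {α V : Type} (w : List (Label α V)) : List α :=
  w.filterMap fun l => match l with
    | Label.letter a => some a
    | _ => none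

/-- A ref-word is valid if for each variable, either its markers do not appear, or
the opening and closing markers appear exactly once with the opening first. -/
def ValidRef {α V : Type} [DecidableEq α] [DecidableEq V] (w : List (Label α V)) : Prop :=
  ∀ x : V,
    (Label.vopen x ∉ w ∧ Label.vclose x ∉ w) ∨
    (w.count (Label.vopen x) = 1 ∧ w.count (Label.vclose x) = 1 ∧
      w.idxOf (Label.vopen x) < w.idxOf (Label.vclose x))

/-- The mapping defined by a (valid) ref-word: each marked variable is sent to the
span delimited by the positions at which its markers are read. -/
def refMapping {α V : Type} [DecidableEq α] [DecidableEq V] (w : List (Label α V)) :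
    Mapping V := fun x =>
  if Label.vopen x ∈ w then
    some ((letters (w.take (w.idxOf (Label.vopen x)))).length,
          (letters (w.take (w.idxOf (Label.vclose x)))).length)
  else none

/-- A variable-set automaton with state type `Q`. -/
structure VA (α V Q : Type) : Type where
  init : Q
  final : Set Q
  trans : Q → Label α V → Q → Prop

/-- Paths in a VA. -/
inductive VA.Path {α V Q : Type} (A : VA α V Q) : Q → List (Label α V) → Q → Prop where
  | nil (q : Q) : VA.Path A q [] q
  | cons {q q' q'' : Q} {l : Label α V} {w : List (Label α V)} :
      A.trans q l q' → VA.Path A q' w q'' → VA.Path A q (l :: w) q''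

/-- The VA accepts the ref-word `w` (an accepting run reads `w`). -/
def VA.AcceptsRef {α V Q : Type} (A : VA α V Q) (w : List (Label α V)) : Prop :=
  ∃ qf ∈ A.final, A.Path A.init w qf

/-- A VA is sequential if every accepting run is valid. -/
def VA.Sequential {α V Q : Type} [DecidableEq α] [DecidableEq V] (A : VA α V Q) : Prop :=
  ∀ w, A.AcceptsRef w → ValidRef w

/-- The spanner defined by a (sequential) VA. -/
def VA.spanner {α V Q : Type} [DecidableEq α] [DecidableEq V] (A : VA α V Q) :
    Spanner α V := fun d =>
  {m | ∃ w, A.AcceptsRef w ∧ letters w = d ∧ refMapping w = m}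

/-- A spanner is regular if it is defined by some sequential VA with finitely many states. -/
def IsRegular {α V : Type} [DecidableEq α] [DecidableEq V] (P : Spanner α V) : Prop :=
  ∃ (Q : Type) (_ : Fintype Q) (A : VA α V Q), A.Sequential ∧ A.spanner = P

/-- The skyline operator: keep only the mappings of `P d` that are maximal under `R d`. -/
def skyline {α V : Type} (P : Spanner α V)
    (R : List α → Mapping V → Mapping V → Prop) : Spanner α V := fun d =>
  {m | m ∈ P d ∧ ∀ m' ∈ P d, m' ≠ m → ¬ R d m m'}

/-- The variable inclusion domination relation: `m2` extends `m1`. -/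
def varIncRel {V : Type} (m1 m2 : Mapping V) : Prop :=
  ∀ x s, m1 x = some s → m2 x = some s

/-- Two mappings have the same domain. -/
def sameDom {V : Type} (m1 m2 : Mapping V) : Prop :=
  ∀ x, m1 x = none ↔ m2 x = none

/-- The span inclusion domination relation. -/
def spanIncRel {V : Type} (m1 m2 : Mapping V) : Prop :=
  sameDom m1 m2 ∧
    ∀ x s1 s2, m1 x = some s1 → m2 x = some s2 → s2.1 ≤ s1.1 ∧ s1.2 ≤ s2.2

/-- The left-to-right domination relation: same start, `m2` no shorter. -/
def ltrRel {V : Type} (m1 m2 : Mapping V) : Prop :=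
  sameDom m1 m2 ∧
    ∀ x s1 s2, m1 x = some s1 → m2 x = some s2 →
      s1.1 = s2.1 ∧ s1.2 - s1.1 ≤ s2.2 - s2.1

/-- The span length domination relation: `m2`'s spans are no shorter. -/
def spanLenRel {V : Type} (m1 m2 : Mapping V) : Prop :=
  sameDom m1 m2 ∧
    ∀ x s1 s2, m1 x = some s1 → m2 x = some s2 → s1.2 - s1.1 ≤ s2.2 - s2.1

/-
Fix an accepting run `u₁ ++ u₂` passing through `s` with `x` open after `u₁`. In a valid
ref-word split as `w₁ ++ w₂`, each marker of `x` occurs at most once, so `x` is open after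
`w₁` exactly when `⊣x` occurs in the suffix `w₂` and `⊢x` does not. Since every prefix
`w₁` reaching `s` can be completed by the same suffix `u₂` to an accepting (hence valid)
run, openness of `x` at `s` is decided by `u₂` alone.
-/
theorem _root_.List.mem_left_iff_not_mem_right_of_count_append_eq_one {β : Type*}
    [BEq β] [LawfulBEq β] {u v : List β} {a : β} (h : (u ++ v).count a = 1) :
    a ∈ u ↔ a ∉ v := by
  rw [List.count_append] at h
  rw [← List.one_le_count_iff, ← List.count_eq_zero]
  omega

theorem VA.Path.append {α V Q : Type} {A : VA α V Q} {q q' q'' : Q}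
    {w1 w2 : List (Label α V)} (h1 : A.Path q w1 q') (h2 : A.Path q' w2 q'') :
    A.Path q (w1 ++ w2) q'' := by
  induction h1 with
  | nil => simpa using h2
  | cons ht _ ih => exact VA.Path.cons ht (ih h2)

section Markers

variable {α V : Type} [DecidableEq α] [DecidableEq V]

theorem ValidRef.count_markers_eq_one {w : List (Label α V)} (hw : ValidRef w) {x : V}
    (hx : Label.vopen x ∈ w ∨ Label.vclose x ∈ w) :
    w.count (Label.vopen x) = 1 ∧ w.count (Label.vclose x) = 1 := by
  rcases hw x with ⟨ho, hc⟩ | ⟨ho, hc, -⟩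
  · exact absurd hx (by tauto)
  · exact ⟨ho, hc⟩

theorem ValidRef.open_after_prefix_iff {w1 w2 : List (Label α V)} (hw : ValidRef (w1 ++ w2))
    (x : V) :
    (Label.vopen x ∈ w1 ∧ Label.vclose x ∉ w1) ↔
      (Label.vclose x ∈ w2 ∧ Label.vopen x ∉ w2) := by
  by_cases hx : Label.vopen x ∈ w1 ++ w2 ∨ Label.vclose x ∈ w1 ++ w2
  · obtain ⟨ho, hc⟩ := hw.count_markers_eq_one hx
    rw [List.mem_left_iff_not_mem_right_of_count_append_eq_one ho,
      List.mem_left_iff_not_mem_right_of_count_append_eq_one hc]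
    tauto
  · simp only [List.mem_append, not_or] at hx
    tauto

end Markers

theorem VA.Sequential.validRef_append {α V Q : Type} [DecidableEq α] [DecidableEq V]
    {A : VA α V Q} (hseq : A.Sequential) {s qf : Q} {w1 w2 : List (Label α V)}
    (hqf : qf ∈ A.final) (h1 : A.Path A.init w1 s) (h2 : A.Path s w2 qf) :
    ValidRef (w1 ++ w2) :=
  hseq _ ⟨qf, hqf, h1.append h2⟩

/-- If some accepting run of a sequential VA `A` has the variable `x`
open at a point where `A` is in state `s`, then in every accepting run of `A`, at every
point where `A` is in state `s`, the variable `x` is open. A point of an accepting run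
in state `s` is given by a decomposition into a path from the initial state to `s`
reading `w1` and a path from `s` to a final state reading `w2`; `x` is open at that
point iff `⊢x ∈ w1` and `⊣x ∉ w1`. -/
theorem open_variables_determined_by_state {α V Q : Type} [DecidableEq α] [DecidableEq V]
    (A : VA α V Q) (hseq : A.Sequential) (s : Q) (x : V)
    (h : ∃ (w1 w2 : List (Label α V)) (qf : Q), qf ∈ A.final ∧
          A.Path A.init w1 s ∧ A.Path s w2 qf ∧
          Label.vopen x ∈ w1 ∧ Label.vclose x ∉ w1) :
    ∀ (w1 w2 : List (Label α V)) (qf : Q), qf ∈ A.final →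
      A.Path A.init w1 s → A.Path s w2 qf →
      Label.vopen x ∈ w1 ∧ Label.vclose x ∉ w1 := by
  obtain ⟨u1, u2, pf, hpf, hu1, hu2, hopen⟩ := h
  intro w1 _ _ _ hw1 _
  have hsuffix : Label.vclose x ∈ u2 ∧ Label.vopen x ∉ u2 :=
    ((hseq.validRef_append hpf hu1 hu2).open_after_prefix_iff x).1 hopen
  exact ((hseq.validRef_append hpf hw1 hu2).open_after_prefix_iff x).2 hsuffix

end DocSpanners
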